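/- arXiv:2508.06197 — 3 statements merged into one kernel-verified Lean document; each statement's English description precedes it below -/
import Mathlib

section
/- Let n, N ≥ 1, ρ > 0, Δ ≥ 0, M_z ≥ 0, and for each i ∈ {1,…,N} let μᵢ > 0 and let fᵢ : ℝⁿ → ℝ be differentiable and satisfy fᵢ(a) + ⟨∇fᵢ(a), b − a⟩ + (μᵢ/2)‖b − a‖² ≤ fᵢ(b) for all a, b. Let ẑ, ẑ⁺, z* ∈ ℝⁿ and, for each i, xᵢ⁺, gᵢ, λ̂ᵢ, λ̂ᵢ⁺, λᵢ* ∈ ℝⁿ satisfy: (i) gᵢ = ∇fᵢ(xᵢ⁺) and gᵢ = ρ(ẑ − xᵢ⁺) − λ̂ᵢ; (ii) λ̂ᵢ⁺ = ρ(xᵢ⁺ − ẑ⁺) − gᵢ; (iii) ∇fᵢ(z*) = −λᵢ* and ∑_{i=1}^N λᵢ* = 0; (iv) ‖ẑ − z*‖ ≤ M_z and ‖ẑ⁺ − z*‖ ≤ M_z; (v) ‖∑_{i=1}^N λ̂ᵢ‖ ≤ 2ρNΔ and ‖∑_{i=1}^N λ̂ᵢ⁺‖ ≤ 2ρNΔ.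 Then ∑_{i=1}^N μᵢ‖xᵢ⁺ − z*‖² ≤ (1/4)𝓛(ẑ, λ̂) − (1/4)𝓛(ẑ⁺, λ̂⁺) + 6ρ M_z N Δ, where 𝓛(z, λ) = (1/ρ)∑_{i=1}^N ‖λᵢ − λᵢ*‖² + ρN‖z − z*‖². -/
open RealInnerProductSpace

lemma aux_key (ρ : ℝ) (hρ : ρ ≠ 0) {E : Type*} [NormedAddCommGroup E] [InnerProductSpace ℝ E]
    (x z zp s l ls : E) :
    ⟪(ρ • (z - x) - l) + ls, x - s⟫ =
      (4 * ρ)⁻¹ * (‖l - ls‖ ^ 2 - ‖(ρ • (x - zp) - (ρ • (z - x) - l)) - ls‖ ^ 2)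
        - ρ * ⟪x - s, zp - s⟫ + ρ / 4 * ‖(z - s) + (zp - s)‖ ^ 2
        - (1 / 2) * ⟪(z - s) + (zp - s), l - ls⟫ := by
  simp only [← real_inner_self_eq_norm_sq, inner_sub_left, inner_sub_right, inner_add_left,
    inner_add_right, real_inner_smul_left, real_inner_smul_right, real_inner_comm]
  field_simp
  ring

/-- Key per-iteration descent inequality (equation (43)) of Theorem 1 of the
paper for the QuDRC-ALADIN iteration, under `μᵢ`-strong convexity of the local
cost functions.  The Lyapunov function is
`𝓛(z, λ) = (1/ρ) ∑ᵢ ‖λᵢ − λᵢ*‖² + ρ N ‖z − z*‖²`. -/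
theorem stmt_12 (n N : ℕ) (hn : 1 ≤ n) (hN : 1 ≤ N) (ρ Δ Mz : ℝ)
    (hρ : 0 < ρ) (hΔ : 0 ≤ Δ) (hMz : 0 ≤ Mz)
    (μ : Fin N → ℝ) (hμ : ∀ i, 0 < μ i)
    (f : Fin N → EuclideanSpace ℝ (Fin n) → ℝ)
    (hf : ∀ i, Differentiable ℝ (f i))
    (hsc : ∀ i, ∀ a b, f i a + ⟪gradient (f i) a, b - a⟫ + μ i / 2 * ‖b - a‖ ^ 2 ≤ f i b)
    (zhat zhatp zs : EuclideanSpace ℝ (Fin n))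
    (xp g lamhat lamhatp lams : Fin N → EuclideanSpace ℝ (Fin n))
    (hg1 : ∀ i, g i = gradient (f i) (xp i))
    (hg2 : ∀ i, g i = ρ • (zhat - xp i) - lamhat i)
    (hlamp : ∀ i, lamhatp i = ρ • (xp i - zhatp) - g i)
    (hkkt1 : ∀ i, gradient (f i) zs = -lams i)
    (hkkt2 : ∑ i, lams i = 0)
    (hz : ‖zhat - zs‖ ≤ Mz) (hzp : ‖zhatp - zs‖ ≤ Mz)
    (hlam : ‖∑ i, lamhat i‖ ≤ 2 * ρ * N * Δ)
    (hlamsum : ‖∑ i, lamhatp i‖ ≤ 2 * ρ * N * Δ) :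
    ∑ i, μ i * ‖xp i - zs‖ ^ 2
      ≤ (4 : ℝ)⁻¹ * (ρ⁻¹ * ∑ i, ‖lamhat i - lams i‖ ^ 2 + ρ * N * ‖zhat - zs‖ ^ 2)
        - (4 : ℝ)⁻¹ * (ρ⁻¹ * ∑ i, ‖lamhatp i - lams i‖ ^ 2 + ρ * N * ‖zhatp - zs‖ ^ 2)
        + 6 * ρ * Mz * N * Δ := by
  have hρ' : ρ ≠ 0 := ne_of_gt hρ
  -- Step 1 : strong-convexity pointwise bound
  have step1 : ∀ i, μ i * ‖xp i - zs‖ ^ 2 ≤ ⟪g i + lams i, xp i - zs⟫ := by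
    intro i
    have h1 := hsc i (xp i) zs
    have h2 := hsc i zs (xp i)
    rw [← hg1 i] at h1
    rw [hkkt1 i] at h2
    have e1 : ⟪g i, zs - xp i⟫ = -⟪g i, xp i - zs⟫ := by
      rw [← inner_neg_right]; congr 1; abel
    have e2 : ⟪-lams i, xp i - zs⟫ = -⟪lams i, xp i - zs⟫ := by
      rw [inner_neg_left]
    have e3 : ‖zs - xp i‖ = ‖xp i - zs‖ := norm_sub_rev _ _
    have e4 : ⟪g i + lams i, xp i - zs⟫ = ⟪g i, xp i - zs⟫ + ⟪lams i, xp i - zs⟫ :=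
      inner_add_left _ _ _
    rw [e1, e3] at h1
    rw [e2] at h2
    nlinarith [h1, h2, hμ i, sq_nonneg ‖xp i - zs‖]
  -- Step 2 : per-index identity
  have key : ∀ i, ⟪g i + lams i, xp i - zs⟫ =
      (4 * ρ)⁻¹ * (‖lamhat i - lams i‖ ^ 2 - ‖lamhatp i - lams i‖ ^ 2)
        - ρ * ⟪xp i - zs, zhatp - zs⟫
        + ρ / 4 * ‖(zhat - zs) + (zhatp - zs)‖ ^ 2
        - (1 / 2) * ⟪(zhat - zs) + (zhatp - zs), lamhat i - lams i⟫ := by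
    intro i
    have := aux_key ρ hρ' (xp i) zhat zhatp zs (lamhat i) (lams i)
    rw [hg2 i, hlamp i, hg2 i]
    exact this
  -- Step 3 : sum of the identity
  set A := ∑ i, ‖lamhat i - lams i‖ ^ 2 with hA
  set B := ∑ i, ‖lamhatp i - lams i‖ ^ 2 with hB
  have eP : ∑ i, (4 * ρ)⁻¹ * (‖lamhat i - lams i‖ ^ 2 - ‖lamhatp i - lams i‖ ^ 2)
      = (4 * ρ)⁻¹ * (A - B) := by
    rw [← Finset.mul_sum, Finset.sum_sub_distrib]
  have eQ : ∑ i, ρ * ⟪xp i - zs, zhatp - zs⟫ = ρ * ⟪∑ i, (xp i - zs), zhatp - zs⟫ := by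
    rw [← Finset.mul_sum, ← sum_inner]
  have eC : ∑ _i : Fin N, (ρ / 4 * ‖(zhat - zs) + (zhatp - zs)‖ ^ 2)
      = (N : ℝ) * (ρ / 4 * ‖(zhat - zs) + (zhatp - zs)‖ ^ 2) := by
    rw [Finset.sum_const, Finset.card_univ, Fintype.card_fin, nsmul_eq_mul]
  have eD : ∑ i, (1 / 2 : ℝ) * ⟪(zhat - zs) + (zhatp - zs), lamhat i - lams i⟫
      = (1 / 2) * ⟪(zhat - zs) + (zhatp - zs), ∑ i, lamhat i⟫ := by
    rw [← Finset.mul_sum, ← inner_sum, Finset.sum_sub_distrib, hkkt2, sub_zero]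
  have hsum : ∑ i, ⟪g i + lams i, xp i - zs⟫ =
      (4 * ρ)⁻¹ * (A - B)
        - ρ * ⟪∑ i, (xp i - zs), zhatp - zs⟫
        + (N : ℝ) * (ρ / 4 * ‖(zhat - zs) + (zhatp - zs)‖ ^ 2)
        - (1 / 2) * ⟪(zhat - zs) + (zhatp - zs), ∑ i, lamhat i⟫ := by
    rw [Finset.sum_congr rfl fun i _ => key i, Finset.sum_sub_distrib, Finset.sum_add_distrib,
      Finset.sum_sub_distrib, eP, eQ, eC, eD]
  -- Step 4 : relation between ∑(xp i - zs) and dual sums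
  have hsum2 : (∑ i, lamhatp i) - (∑ i, lamhat i) =
      (2 * ρ) • (∑ i, (xp i - zs)) - ((ρ * N)) • ((zhat - zs) + (zhatp - zs)) := by
    have hper : ∀ i, lamhatp i - lamhat i =
        (2 * ρ) • (xp i - zs) - ρ • ((zhat - zs) + (zhatp - zs)) := by
      intro i
      rw [hlamp i, hg2 i]
      module
    calc (∑ i, lamhatp i) - (∑ i, lamhat i) = ∑ i, (lamhatp i - lamhat i) :=
          (Finset.sum_sub_distrib _ _).symm
      _ = ∑ i, ((2 * ρ) • (xp i - zs) - ρ • ((zhat - zs) + (zhatp - zs))) :=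
          Finset.sum_congr rfl fun i _ => hper i
      _ = (2 * ρ) • (∑ i, (xp i - zs)) - (ρ * N) • ((zhat - zs) + (zhatp - zs)) := by
          rw [Finset.sum_sub_distrib, ← Finset.smul_sum, Finset.sum_const, Finset.card_univ,
            Fintype.card_fin, ← Nat.cast_smul_eq_nsmul ℝ, smul_smul, mul_comm (N : ℝ) ρ]
  -- scalar consequence
  have hWv : (2 * ρ) * ⟪∑ i, (xp i - zs), zhatp - zs⟫ =
      ⟪(∑ i, lamhatp i), zhatp - zs⟫ - ⟪(∑ i, lamhat i), zhatp - zs⟫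
        + (ρ * N) * ⟪(zhat - zs) + (zhatp - zs), zhatp - zs⟫ := by
    have h := congrArg (fun w : EuclideanSpace ℝ (Fin n) => ⟪w, zhatp - zs⟫) hsum2
    simp only [inner_sub_left, real_inner_smul_left] at h
    linarith
  -- Step 5 : scalar wrap-up
  have hchain : ∑ i, μ i * ‖xp i - zs‖ ^ 2 ≤ ∑ i, ⟪g i + lams i, xp i - zs⟫ :=
    Finset.sum_le_sum fun i _ => step1 i
  rw [hsum] at hchain
  have hnorm : ‖(zhat - zs) + (zhatp - zs)‖ ^ 2 =
      ‖zhat - zs‖ ^ 2 + 2 * ⟪zhat - zs, zhatp - zs⟫ + ‖zhatp - zs‖ ^ 2 :=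
    norm_add_sq_real _ _
  have hinner1 : ⟪(zhat - zs) + (zhatp - zs), zhatp - zs⟫ =
      ⟪zhat - zs, zhatp - zs⟫ + ‖zhatp - zs‖ ^ 2 := by
    rw [inner_add_left, real_inner_self_eq_norm_sq]
  have hinner2 : ⟪(zhat - zs) + (zhatp - zs), ∑ i, lamhat i⟫ =
      ⟪zhat - zs, ∑ i, lamhat i⟫ + ⟪zhatp - zs, ∑ i, lamhat i⟫ := inner_add_left _ _ _
  have hsym : ⟪zhatp - zs, ∑ i, lamhat i⟫ = ⟪(∑ i, lamhat i), zhatp - zs⟫ :=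
    real_inner_comm _ _
  rw [hinner1] at hWv
  rw [hnorm, hinner2, hsym] at hchain
  -- Cauchy–Schwarz bounds
  have hbound1 : |⟪(∑ i, lamhatp i), zhatp - zs⟫| ≤ (2 * ρ * N * Δ) * Mz := by
    calc |⟪(∑ i, lamhatp i), zhatp - zs⟫| ≤ ‖∑ i, lamhatp i‖ * ‖zhatp - zs‖ :=
          abs_real_inner_le_norm _ _
      _ ≤ (2 * ρ * N * Δ) * Mz :=
          mul_le_mul hlamsum hzp (norm_nonneg _) (by positivity)
  have hbound2 : |⟪zhat - zs, ∑ i, lamhat i⟫| ≤ Mz * (2 * ρ * N * Δ) := by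
    calc |⟪zhat - zs, ∑ i, lamhat i⟫| ≤ ‖zhat - zs‖ * ‖∑ i, lamhat i‖ :=
          abs_real_inner_le_norm _ _
      _ ≤ Mz * (2 * ρ * N * Δ) := mul_le_mul hz hlam (norm_nonneg _) hMz
  have hinv : (4 * ρ)⁻¹ * (A - B) = (4 : ℝ)⁻¹ * (ρ⁻¹ * A) - (4 : ℝ)⁻¹ * (ρ⁻¹ * B) := by
    field_simp
  have hnn : 0 ≤ ρ * N * Δ * Mz := by positivity
  have habs1 := abs_le.mp hbound1
  have habs2 := abs_le.mp hbound2
  linarith [hchain, hWv, hinv, hnn, habs1.1, habs1.2, habs2.1, habs2.2]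
end

section
/- Let n, N ≥ 1, ρ > 0, Δ ≥ 0, M_z ≥ 0, δ > 0, and for each i ∈ {1,…,N} let μᵢ > 0 and let fᵢ : ℝⁿ → ℝ be differentiable and satisfy fᵢ(a) + ⟨∇fᵢ(a), b − a⟩ + (μᵢ/2)‖b − a‖² ≤ fᵢ(b) for all a, b. Let ẑ, ẑ⁺, z* ∈ ℝⁿ and, for each i, xᵢ⁺, gᵢ, λ̂ᵢ, λ̂ᵢ⁺, λᵢ* ∈ ℝⁿ satisfy: (i) gᵢ = ∇fᵢ(xᵢ⁺) and gᵢ = ρ(ẑ − xᵢ⁺) − λ̂ᵢ; (ii) λ̂ᵢ⁺ = ρ(xᵢ⁺ − ẑ⁺) − gᵢ; (iii) ∇fᵢ(z*) = −λᵢ* and ∑_{i=1}^N λᵢ* = 0; (iv) ‖ẑ − z*‖ ≤ M_z and ‖ẑ⁺ − z*‖ ≤ M_z; (v) ‖∑_{i=1}^N λ̂ᵢ‖ ≤ 2ρNΔ and ‖∑_{i=1}^N λ̂ᵢ⁺‖ ≤ 2ρNΔ; (vi) δ 𝓛(ẑ⁺, λ̂⁺) ≤ 4 ∑_{i=1}^N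 μᵢ‖xᵢ⁺ − z*‖². Then 𝓛(ẑ⁺, λ̂⁺) ≤ (1/(1+δ)) 𝓛(ẑ, λ̂) + (4/(1+δ)) · 6ρ M_z N Δ, where 𝓛(z, λ) = (1/ρ)∑_{i=1}^N ‖λᵢ − λᵢ*‖² + ρN‖z − z*‖². -/
open RealInnerProductSpace

lemma key_id {E : Type*} [NormedAddCommGroup E] [InnerProductSpace ℝ E]
    (ρ : ℝ) (hρ : ρ ≠ 0) (ap w u up : E) :
    ρ⁻¹ * (‖ap‖^2 - ‖ap - ρ • ((2:ℝ) • w - u - up)‖^2)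
      + 4 * (ρ * ⟪w - up, w⟫ - ⟪ap, w⟫)
      + ρ * (‖up‖^2 - ‖u‖^2)
    = -2 * ⟪up, ap⟫ - 2 * ⟪u, ap - ρ • ((2:ℝ) • w - u - up)⟫ := by
  have h : ∀ x : E, ‖x‖^2 = ⟪x, x⟫ := fun x => (real_inner_self_eq_norm_sq x).symm
  simp only [h, inner_sub_left, inner_sub_right, inner_smul_left, inner_smul_right,
    inner_add_left, inner_add_right, two_smul, conj_trivial]
  rw [real_inner_comm w u, real_inner_comm w up, real_inner_comm up u,
      real_inner_comm ap u, real_inner_comm ap up, real_inner_comm ap w]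
  field_simp
  ring

/-- Theorem 1 of the paper: global linear convergence of QuDRC-ALADIN under
strong convexity, to a quantization-level-dependent neighborhood of the
optimum.  The Lyapunov function is
`𝓛(z, λ) = (1/ρ) ∑ᵢ ‖λᵢ − λᵢ*‖² + ρ N ‖z − z*‖²`. -/
theorem stmt_13 (n N : ℕ) (hn : 1 ≤ n) (hN : 1 ≤ N) (ρ Δ Mz δ : ℝ)
    (hρ : 0 < ρ) (hΔ : 0 ≤ Δ) (hMz : 0 ≤ Mz) (hδ : 0 < δ)
    (μ : Fin N → ℝ) (hμ : ∀ i, 0 < μ i)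
    (f : Fin N → EuclideanSpace ℝ (Fin n) → ℝ)
    (hf : ∀ i, Differentiable ℝ (f i))
    (hsc : ∀ i, ∀ a b, f i a + ⟪gradient (f i) a, b - a⟫ + μ i / 2 * ‖b - a‖ ^ 2 ≤ f i b)
    (zhat zhatp zs : EuclideanSpace ℝ (Fin n))
    (xp g lamhat lamhatp lams : Fin N → EuclideanSpace ℝ (Fin n))
    (hg1 : ∀ i, g i = gradient (f i) (xp i))
    (hg2 : ∀ i, g i = ρ • (zhat - xp i) - lamhat i)
    (hlamp : ∀ i, lamhatp i = ρ • (xp i - zhatp) - g i)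
    (hkkt1 : ∀ i, gradient (f i) zs = -lams i)
    (hkkt2 : ∑ i, lams i = 0)
    (hz : ‖zhat - zs‖ ≤ Mz) (hzp : ‖zhatp - zs‖ ≤ Mz)
    (hlam : ‖∑ i, lamhat i‖ ≤ 2 * ρ * N * Δ)
    (hlamsum : ‖∑ i, lamhatp i‖ ≤ 2 * ρ * N * Δ)
    (hδcond : δ * (ρ⁻¹ * ∑ i, ‖lamhatp i - lams i‖ ^ 2 + ρ * N * ‖zhatp - zs‖ ^ 2)
        ≤ 4 * ∑ i, μ i * ‖xp i - zs‖ ^ 2) :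
    ρ⁻¹ * ∑ i, ‖lamhatp i - lams i‖ ^ 2 + ρ * N * ‖zhatp - zs‖ ^ 2
      ≤ (1 + δ)⁻¹ * (ρ⁻¹ * ∑ i, ‖lamhat i - lams i‖ ^ 2 + ρ * N * ‖zhat - zs‖ ^ 2)
        + 4 / (1 + δ) * (6 * ρ * Mz * N * Δ) := by
  have hρ' : ρ ≠ 0 := ne_of_gt hρ
  set u := zhat - zs with hu
  set up := zhatp - zs with hup
  -- relation: lamhat i - lams i = (lamhatp i - lams i) - ρ • (2•(xp i - zs) - u - up)
  have hrel : ∀ i, lamhat i - lams i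
      = (lamhatp i - lams i) - ρ • ((2:ℝ) • (xp i - zs) - u - up) := by
    intro i
    have h1 := hlamp i
    rw [hg2 i] at h1
    rw [hu, hup, h1]
    module
  -- strong convexity per-i inequality
  have hsci : ∀ i, μ i * ‖xp i - zs‖ ^ 2
      ≤ ρ * ⟪xp i - zs - up, xp i - zs⟫ - ⟪lamhatp i - lams i, xp i - zs⟫ := by
    intro i
    have h1 := hsc i (xp i) zs
    have h2 := hsc i zs (xp i)
    rw [← hg1 i] at h1
    rw [hkkt1 i] at h2
    have hnorm : ‖zs - xp i‖ = ‖xp i - zs‖ := norm_sub_rev _ _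
    rw [hnorm] at h1
    have hge : g i = ρ • (xp i - zhatp) - lamhatp i := by
      rw [hlamp i]; abel
    have hkey : ⟪g i, zs - xp i⟫ + ⟪-lams i, xp i - zs⟫
        = -(ρ * ⟪xp i - zs - up, xp i - zs⟫ - ⟪lamhatp i - lams i, xp i - zs⟫) := by
      have : zs - xp i = -(xp i - zs) := by abel
      rw [this, inner_neg_right, hge]
      have hx : ρ • (xp i - zhatp) - lamhatp i
          = ρ • (xp i - zs - up) - (lamhatp i - lams i) - lams i := by
        rw [hup]; module
      rw [hx]
      simp only [inner_sub_left, inner_smul_left, inner_neg_left, conj_trivial]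
      ring
    nlinarith [h1, h2, hkey]
  -- combined per-i inequality
  have hper : ∀ i, 4 * (μ i * ‖xp i - zs‖ ^ 2)
      + (ρ⁻¹ * (‖lamhatp i - lams i‖ ^ 2 - ‖lamhat i - lams i‖ ^ 2)
         + ρ * (‖up‖ ^ 2 - ‖u‖ ^ 2))
      ≤ -2 * ⟪up, lamhatp i - lams i⟫ - 2 * ⟪u, lamhat i - lams i⟫ := by
    intro i
    have hid := key_id ρ hρ' (lamhatp i - lams i) (xp i - zs) u up
    rw [← hrel i] at hid
    have := hsci i
    nlinarith [this]
  -- sum over i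
  have hsum := Finset.sum_le_sum (fun i (_ : i ∈ Finset.univ) => hper i)
  rw [Finset.sum_add_distrib, Finset.sum_add_distrib, Finset.sum_sub_distrib] at hsum
  simp only [← Finset.mul_sum, Finset.sum_sub_distrib, Finset.sum_const,
    Finset.card_univ, Fintype.card_fin, nsmul_eq_mul, ← inner_sum] at hsum
  rw [hkkt2] at hsum
  simp only [sub_zero] at hsum
  -- bound the inner products
  have hb1 : -⟪up, ∑ i, lamhatp i⟫ ≤ Mz * (2 * ρ * N * Δ) := by
    calc -⟪up, ∑ i, lamhatp i⟫ ≤ ‖up‖ * ‖∑ i, lamhatp i‖ := by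
          have := abs_real_inner_le_norm up (∑ i, lamhatp i)
          cases abs_cases ⟪up, ∑ i, lamhatp i⟫ with
          | inl h => linarith [h.1]
          | inr h => linarith [h.1]
      _ ≤ Mz * (2 * ρ * N * Δ) := by
          apply mul_le_mul hzp hlamsum (norm_nonneg _) hMz
  have hb2 : -⟪u, ∑ i, lamhat i⟫ ≤ Mz * (2 * ρ * N * Δ) := by
    calc -⟪u, ∑ i, lamhat i⟫ ≤ ‖u‖ * ‖∑ i, lamhat i‖ := by
          have := abs_real_inner_le_norm u (∑ i, lamhat i)
          cases abs_cases ⟪u, ∑ i, lamhat i⟫ with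
          | inl h => linarith [h.1]
          | inr h => linarith [h.1]
      _ ≤ Mz * (2 * ρ * N * Δ) := by
          apply mul_le_mul hz hlam (norm_nonneg _) hMz
  -- assemble: generalize to scalars
  have h1δ : (0:ℝ) < 1 + δ := by linarith
  have hq : (0:ℝ) ≤ ρ * Mz * N * Δ := by positivity
  rw [show ρ⁻¹ * (∑ i, ‖lamhatp i - lams i‖ ^ 2 - ∑ i, ‖lamhat i - lams i‖ ^ 2)
      + ρ * (↑N * ‖up‖ ^ 2 - ↑N * ‖u‖ ^ 2)
      = (ρ⁻¹ * ∑ i, ‖lamhatp i - lams i‖ ^ 2 + ρ * ↑N * ‖up‖ ^ 2)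
        - (ρ⁻¹ * ∑ i, ‖lamhat i - lams i‖ ^ 2 + ρ * ↑N * ‖u‖ ^ 2) from by ring] at hsum
  generalize hLpdef : ρ⁻¹ * ∑ i, ‖lamhatp i - lams i‖ ^ 2 + ρ * ↑N * ‖up‖ ^ 2 = Lp
    at hsum hδcond ⊢
  generalize hLdef : ρ⁻¹ * ∑ i, ‖lamhat i - lams i‖ ^ 2 + ρ * ↑N * ‖u‖ ^ 2 = L
    at hsum ⊢
  generalize hI1def : ⟪up, ∑ i, lamhatp i⟫ = I1 at hsum hb1
  generalize hI2def : ⟪u, ∑ i, lamhat i⟫ = I2 at hsum hb2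
  generalize hCdef : (∑ i, μ i * ‖xp i - zs‖ ^ 2) = C at hsum hδcond
  clear hsc hf hg1 hg2 hlamp hkkt1 hkkt2 hrel hsci hper hz hzp hlam hlamsum
  clear hLpdef hLdef hI1def hI2def hCdef hu hup
  clear f g xp lamhat lamhatp lams zhat zhatp zs u up μ hμ
  have hmain : (1 + δ) * Lp ≤ L + 24 * (ρ * Mz * N * Δ) := by nlinarith [hq]
  calc Lp = (1 + δ)⁻¹ * ((1 + δ) * Lp) := by field_simp
    _ ≤ (1 + δ)⁻¹ * (L + 24 * (ρ * Mz * N * Δ)) := by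
        apply mul_le_mul_of_nonneg_left hmain (by positivity)
    _ = (1 + δ)⁻¹ * L + 4 / (1 + δ) * (6 * ρ * Mz * N * Δ) := by
        field_simp; ring
end

section
/- Let n, N ≥ 1, ρ > 0, Δ ≥ 0, M_z ≥ 0, δ > 0, and for each i ∈ {1,…,N} let Lᵢ > 0 and let fᵢ : ℝⁿ → ℝ be differentiable and satisfy the co-coercivity inequality ‖∇fᵢ(a) − ∇fᵢ(b)‖² ≤ Lᵢ ⟨∇fᵢ(a) − ∇fᵢ(b), a − b⟩ for all a, b. Let ẑ, ẑ⁺, z* ∈ ℝⁿ and, for each i, xᵢ⁺, gᵢ, λ̂ᵢ, λ̂ᵢ⁺, λᵢ* ∈ ℝⁿ satisfy: (i) gᵢ = ∇fᵢ(xᵢ⁺) and gᵢ = ρ(ẑ − xᵢ⁺) − λ̂ᵢ; (ii) λ̂ᵢ⁺ = ρ(xᵢ⁺ − ẑ⁺) − gᵢ; (iii) ∇fᵢ(z*) = −λᵢ* and ∑_{i=1}^N λᵢ* = 0; (iv) ‖ẑ − z*‖ ≤ M_z and ‖ẑ⁺ − z*‖ ≤ M_z; (v) ‖∑_{i=1}^N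 λ̂ᵢ‖ ≤ 2ρNΔ and ‖∑_{i=1}^N λ̂ᵢ⁺‖ ≤ 2ρNΔ; (vi) δ 𝓛(ẑ⁺, λ̂⁺) ≤ 4 ∑_{i=1}^N (1/Lᵢ)‖gᵢ − ∇fᵢ(z*)‖². Then 𝓛(ẑ⁺, λ̂⁺) ≤ (1/(1+δ)) 𝓛(ẑ, λ̂) + (4/(1+δ)) · 6ρ M_z N Δ, where 𝓛(z, λ) = (1/ρ)∑_{i=1}^N ‖λᵢ − λᵢ*‖² + ρN‖z − z*‖². -/
open RealInnerProductSpace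

lemma key_id_s14 {E : Type*} [NormedAddCommGroup E] [InnerProductSpace ℝ E]
    (ρ : ℝ) (x z zp zs gv l : E) :
    ‖(ρ • (x - zp) - gv) - l‖ ^ 2
      = ‖(ρ • (z - x) - gv) - l‖ ^ 2
        + ρ * ⟪z - zp, (ρ • (x - zp) - gv) - (ρ • (z - x) - gv)⟫
        + ρ ^ 2 * (‖z - zs‖ ^ 2 - ‖zp - zs‖ ^ 2)
        - ρ * ⟪(z - zs) + (zp - zs), (ρ • (z - x) - gv) + (ρ • (x - zp) - gv) - (2:ℝ) • l⟫
        - 4 * ρ * ⟪x - zs, gv + l⟫ := by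
  simp only [← real_inner_self_eq_norm_sq, inner_sub_left, inner_sub_right,
    inner_add_left, inner_add_right, real_inner_smul_left, real_inner_smul_right,
    real_inner_comm z x, real_inner_comm zp x, real_inner_comm zs x,
    real_inner_comm gv x, real_inner_comm l x,
    real_inner_comm zp z, real_inner_comm zs z, real_inner_comm gv z, real_inner_comm l z,
    real_inner_comm zs zp, real_inner_comm gv zp, real_inner_comm l zp,
    real_inner_comm gv zs, real_inner_comm l zs, real_inner_comm l gv]
  ring

set_option maxHeartbeats 1000000 in
/-- Corollary 1 of the paper: global linear convergence of QuDRC-ALADIN under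
convexity and `L`-smoothness (co-coercivity of the gradients), to a
quantization-level-dependent neighborhood of the optimum.  The Lyapunov
function is `𝓛(z, λ) = (1/ρ) ∑ᵢ ‖λᵢ − λᵢ*‖² + ρ N ‖z − z*‖²`. -/
theorem stmt_14 (n N : ℕ) (hn : 1 ≤ n) (hN : 1 ≤ N) (ρ Δ Mz δ : ℝ)
    (hρ : 0 < ρ) (hΔ : 0 ≤ Δ) (hMz : 0 ≤ Mz) (hδ : 0 < δ)
    (L : Fin N → ℝ) (hL : ∀ i, 0 < L i)
    (f : Fin N → EuclideanSpace ℝ (Fin n) → ℝ)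
    (hf : ∀ i, Differentiable ℝ (f i))
    (hcc : ∀ i, ∀ a b, ‖gradient (f i) a - gradient (f i) b‖ ^ 2
        ≤ L i * ⟪gradient (f i) a - gradient (f i) b, a - b⟫)
    (zhat zhatp zs : EuclideanSpace ℝ (Fin n))
    (xp g lamhat lamhatp lams : Fin N → EuclideanSpace ℝ (Fin n))
    (hg1 : ∀ i, g i = gradient (f i) (xp i))
    (hg2 : ∀ i, g i = ρ • (zhat - xp i) - lamhat i)
    (hlamp : ∀ i, lamhatp i = ρ • (xp i - zhatp) - g i)
    (hkkt1 : ∀ i, gradient (f i) zs = -lams i)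
    (hkkt2 : ∑ i, lams i = 0)
    (hz : ‖zhat - zs‖ ≤ Mz) (hzp : ‖zhatp - zs‖ ≤ Mz)
    (hlam : ‖∑ i, lamhat i‖ ≤ 2 * ρ * N * Δ)
    (hlamsum : ‖∑ i, lamhatp i‖ ≤ 2 * ρ * N * Δ)
    (hδcond : δ * (ρ⁻¹ * ∑ i, ‖lamhatp i - lams i‖ ^ 2 + ρ * N * ‖zhatp - zs‖ ^ 2)
        ≤ 4 * ∑ i, (L i)⁻¹ * ‖g i - gradient (f i) zs‖ ^ 2) :
    ρ⁻¹ * ∑ i, ‖lamhatp i - lams i‖ ^ 2 + ρ * N * ‖zhatp - zs‖ ^ 2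
      ≤ (1 + δ)⁻¹ * (ρ⁻¹ * ∑ i, ‖lamhat i - lams i‖ ^ 2 + ρ * N * ‖zhat - zs‖ ^ 2)
        + 4 / (1 + δ) * (6 * ρ * Mz * N * Δ) := by
  have hρ' : ρ ≠ 0 := ne_of_gt hρ
  -- rewrite hδcond
  have hrw : ∀ i, g i - gradient (f i) zs = g i + lams i := fun i => by
    rw [hkkt1 i, sub_neg_eq_add]
  simp only [hrw] at hδcond
  -- co-coercivity per i
  have hcoer : ∀ i, (L i)⁻¹ * ‖g i + lams i‖ ^ 2 ≤ ⟪xp i - zs, g i + lams i⟫ := by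
    intro i
    have h0 := hcc i (xp i) zs
    rw [← hg1 i, hkkt1 i, sub_neg_eq_add] at h0
    rw [real_inner_comm] at h0
    have h1 : (L i)⁻¹ * ‖g i + lams i‖ ^ 2 ≤ (L i)⁻¹ * (L i * ⟪xp i - zs, g i + lams i⟫) :=
      mul_le_mul_of_nonneg_left h0 (inv_nonneg.2 (hL i).le)
    rwa [inv_mul_cancel_left₀ (hL i).ne'] at h1
  -- per-i key inequality
  have hkey : ∀ i, ‖lamhatp i - lams i‖ ^ 2 + 4 * ρ * ((L i)⁻¹ * ‖g i + lams i‖ ^ 2)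
      ≤ ‖lamhat i - lams i‖ ^ 2 + ρ * ⟪zhat - zhatp, lamhatp i - lamhat i⟫
        + ρ ^ 2 * (‖zhat - zs‖ ^ 2 - ‖zhatp - zs‖ ^ 2)
        - ρ * ⟪(zhat - zs) + (zhatp - zs), lamhat i + lamhatp i - (2:ℝ) • lams i⟫ := by
    intro i
    have hlh : lamhat i = ρ • (zhat - xp i) - g i := by rw [hg2 i]; abel
    have id := key_id_s14 ρ (xp i) zhat zhatp zs (g i) (lams i)
    rw [← hlh, ← hlamp i] at id
    have h2 : 4 * ρ * ((L i)⁻¹ * ‖g i + lams i‖ ^ 2) ≤ 4 * ρ * ⟪xp i - zs, g i + lams i⟫ :=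
      mul_le_mul_of_nonneg_left (hcoer i) (by positivity)
    linarith [id]
  have hsum := Finset.sum_le_sum (fun i (_ : i ∈ Finset.univ) => hkey i)
  -- sum identities
  have s1 : ∑ i : Fin N, ⟪zhat - zhatp, lamhatp i - lamhat i⟫
      = ⟪zhat - zhatp, (∑ i, lamhatp i) - ∑ i, lamhat i⟫ := by
    rw [← Finset.sum_sub_distrib, inner_sum]
  have s2 : ∑ i : Fin N, ⟪(zhat - zs) + (zhatp - zs), lamhat i + lamhatp i - (2:ℝ) • lams i⟫
      = ⟪(zhat - zs) + (zhatp - zs), (∑ i, lamhat i) + ∑ i, lamhatp i⟫ := by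
    rw [← inner_sum]
    congr 1
    rw [Finset.sum_sub_distrib, Finset.sum_add_distrib, ← Finset.smul_sum, hkkt2,
      smul_zero, sub_zero]
  rw [Finset.sum_add_distrib, ← Finset.mul_sum] at hsum
  have rhs_eq : ∑ i : Fin N, (‖lamhat i - lams i‖ ^ 2
        + ρ * ⟪zhat - zhatp, lamhatp i - lamhat i⟫
        + ρ ^ 2 * (‖zhat - zs‖ ^ 2 - ‖zhatp - zs‖ ^ 2)
        - ρ * ⟪(zhat - zs) + (zhatp - zs), lamhat i + lamhatp i - (2:ℝ) • lams i⟫)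
      = (∑ i, ‖lamhat i - lams i‖ ^ 2)
        + ρ * ⟪zhat - zhatp, (∑ i, lamhatp i) - ∑ i, lamhat i⟫
        + N * (ρ ^ 2 * (‖zhat - zs‖ ^ 2 - ‖zhatp - zs‖ ^ 2))
        - ρ * ⟪(zhat - zs) + (zhatp - zs), (∑ i, lamhat i) + ∑ i, lamhatp i⟫ := by
    simp only [Finset.sum_sub_distrib, Finset.sum_add_distrib, ← Finset.mul_sum,
      s1, s2, Finset.sum_const, Finset.card_univ, Fintype.card_fin, nsmul_eq_mul]
    ring
  rw [rhs_eq] at hsum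
  -- Cauchy-Schwarz bounds
  have hzz : ‖zhat - zhatp‖ ≤ 2 * Mz := by
    have : zhat - zhatp = (zhat - zs) - (zhatp - zs) := by abel
    rw [this]
    calc ‖(zhat - zs) - (zhatp - zs)‖ ≤ ‖zhat - zs‖ + ‖zhatp - zs‖ := norm_sub_le _ _
      _ ≤ 2 * Mz := by linarith
  have hzz' : ‖(zhat - zs) + (zhatp - zs)‖ ≤ 2 * Mz := by
    calc ‖(zhat - zs) + (zhatp - zs)‖ ≤ ‖zhat - zs‖ + ‖zhatp - zs‖ := norm_add_le _ _
      _ ≤ 2 * Mz := by linarith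
  have hQP : ‖(∑ i, lamhatp i) - ∑ i, lamhat i‖ ≤ 4 * ρ * N * Δ := by
    calc ‖(∑ i, lamhatp i) - ∑ i, lamhat i‖ ≤ ‖∑ i, lamhatp i‖ + ‖∑ i, lamhat i‖ :=
          norm_sub_le _ _
      _ ≤ 4 * ρ * N * Δ := by linarith
  have hPQ : ‖(∑ i, lamhat i) + ∑ i, lamhatp i‖ ≤ 4 * ρ * N * Δ := by
    calc ‖(∑ i, lamhat i) + ∑ i, lamhatp i‖ ≤ ‖∑ i, lamhat i‖ + ‖∑ i, lamhatp i‖ :=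
          norm_add_le _ _
      _ ≤ 4 * ρ * N * Δ := by linarith
  have c1 : ⟪zhat - zhatp, (∑ i, lamhatp i) - ∑ i, lamhat i⟫ ≤ 8 * ρ * Mz * N * Δ := by
    calc ⟪zhat - zhatp, (∑ i, lamhatp i) - ∑ i, lamhat i⟫
        ≤ ‖zhat - zhatp‖ * ‖(∑ i, lamhatp i) - ∑ i, lamhat i‖ := real_inner_le_norm _ _
      _ ≤ (2 * Mz) * (4 * ρ * N * Δ) := by
          apply mul_le_mul hzz hQP (norm_nonneg _) (by linarith)
      _ = 8 * ρ * Mz * N * Δ := by ring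
  have c2 : -⟪(zhat - zs) + (zhatp - zs), (∑ i, lamhat i) + ∑ i, lamhatp i⟫
      ≤ 8 * ρ * Mz * N * Δ := by
    have habs := abs_real_inner_le_norm ((zhat - zs) + (zhatp - zs))
      ((∑ i, lamhat i) + ∑ i, lamhatp i)
    have h3 : ‖(zhat - zs) + (zhatp - zs)‖ * ‖(∑ i, lamhat i) + ∑ i, lamhatp i‖
        ≤ (2 * Mz) * (4 * ρ * N * Δ) :=
      mul_le_mul hzz' hPQ (norm_nonneg _) (by linarith)
    calc -⟪(zhat - zs) + (zhatp - zs), (∑ i, lamhat i) + ∑ i, lamhatp i⟫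
        ≤ |⟪(zhat - zs) + (zhatp - zs), (∑ i, lamhat i) + ∑ i, lamhatp i⟫| := neg_le_abs _
      _ ≤ (2 * Mz) * (4 * ρ * N * Δ) := le_trans habs h3
      _ = 8 * ρ * Mz * N * Δ := by ring
  -- main inequality (multiplied by ρ)
  have main : (∑ i, ‖lamhatp i - lams i‖ ^ 2)
        + 4 * ρ * ∑ i, (L i)⁻¹ * ‖g i + lams i‖ ^ 2
      ≤ (∑ i, ‖lamhat i - lams i‖ ^ 2)
        + N * ρ ^ 2 * ‖zhat - zs‖ ^ 2 - N * ρ ^ 2 * ‖zhatp - zs‖ ^ 2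
        + 16 * ρ ^ 2 * Mz * N * Δ := by
    have b1 : ρ * ⟪zhat - zhatp, (∑ i, lamhatp i) - ∑ i, lamhat i⟫
        ≤ 8 * ρ ^ 2 * Mz * N * Δ := by
      calc ρ * ⟪zhat - zhatp, (∑ i, lamhatp i) - ∑ i, lamhat i⟫
          ≤ ρ * (8 * ρ * Mz * N * Δ) := mul_le_mul_of_nonneg_left c1 hρ.le
        _ = 8 * ρ ^ 2 * Mz * N * Δ := by ring
    have b2 : - (ρ * ⟪(zhat - zs) + (zhatp - zs), (∑ i, lamhat i) + ∑ i, lamhatp i⟫)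
        ≤ 8 * ρ ^ 2 * Mz * N * Δ := by
      calc - (ρ * ⟪(zhat - zs) + (zhatp - zs), (∑ i, lamhat i) + ∑ i, lamhatp i⟫)
          = ρ * (-⟪(zhat - zs) + (zhatp - zs), (∑ i, lamhat i) + ∑ i, lamhatp i⟫) := by ring
        _ ≤ ρ * (8 * ρ * Mz * N * Δ) := mul_le_mul_of_nonneg_left c2 hρ.le
        _ = 8 * ρ ^ 2 * Mz * N * Δ := by ring
    linarith [hsum, b1, b2]
  -- divide main by ρ
  have main' : ρ⁻¹ * (∑ i, ‖lamhatp i - lams i‖ ^ 2)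
        + 4 * ∑ i, (L i)⁻¹ * ‖g i + lams i‖ ^ 2
      ≤ ρ⁻¹ * (∑ i, ‖lamhat i - lams i‖ ^ 2)
        + (N:ℝ) * ρ * ‖zhat - zs‖ ^ 2 - (N:ℝ) * ρ * ‖zhatp - zs‖ ^ 2
        + 16 * ρ * Mz * N * Δ := by
    have h := mul_le_mul_of_nonneg_left main (inv_pos.2 hρ).le
    have e1 : ρ⁻¹ * ((∑ i, ‖lamhatp i - lams i‖ ^ 2)
          + 4 * ρ * ∑ i, (L i)⁻¹ * ‖g i + lams i‖ ^ 2)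
        = ρ⁻¹ * (∑ i, ‖lamhatp i - lams i‖ ^ 2)
          + 4 * ∑ i, (L i)⁻¹ * ‖g i + lams i‖ ^ 2 := by
      field_simp
    have e2 : ρ⁻¹ * ((∑ i, ‖lamhat i - lams i‖ ^ 2)
          + N * ρ ^ 2 * ‖zhat - zs‖ ^ 2 - N * ρ ^ 2 * ‖zhatp - zs‖ ^ 2
          + 16 * ρ ^ 2 * Mz * N * Δ)
        = ρ⁻¹ * (∑ i, ‖lamhat i - lams i‖ ^ 2)
          + (N:ℝ) * ρ * ‖zhat - zs‖ ^ 2 - (N:ℝ) * ρ * ‖zhatp - zs‖ ^ 2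
          + 16 * ρ * Mz * N * Δ := by
      field_simp
    rw [e1, e2] at h
    exact h
  -- final assembly
  have h1δ : (0:ℝ) < 1 + δ := by linarith
  have hnn : (0:ℝ) ≤ ρ * Mz * N * Δ := by positivity
  have final : (ρ⁻¹ * ∑ i, ‖lamhatp i - lams i‖ ^ 2 + ρ * N * ‖zhatp - zs‖ ^ 2)
        + δ * (ρ⁻¹ * ∑ i, ‖lamhatp i - lams i‖ ^ 2 + ρ * N * ‖zhatp - zs‖ ^ 2)
      ≤ (ρ⁻¹ * ∑ i, ‖lamhat i - lams i‖ ^ 2 + ρ * N * ‖zhat - zs‖ ^ 2)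
        + 4 * (6 * ρ * Mz * N * Δ) := by
    linarith [main', hδcond, hnn]
  calc ρ⁻¹ * ∑ i, ‖lamhatp i - lams i‖ ^ 2 + ρ * N * ‖zhatp - zs‖ ^ 2
      = (1 + δ)⁻¹ * ((1 + δ) * (ρ⁻¹ * ∑ i, ‖lamhatp i - lams i‖ ^ 2
          + ρ * N * ‖zhatp - zs‖ ^ 2)) := by
        rw [← mul_assoc, inv_mul_cancel₀ h1δ.ne', one_mul]
    _ ≤ (1 + δ)⁻¹ * ((ρ⁻¹ * ∑ i, ‖lamhat i - lams i‖ ^ 2 + ρ * N * ‖zhat - zs‖ ^ 2)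
          + 4 * (6 * ρ * Mz * N * Δ)) := by
        apply mul_le_mul_of_nonneg_left _ (inv_pos.2 h1δ).le
        linarith [final]
    _ = (1 + δ)⁻¹ * (ρ⁻¹ * ∑ i, ‖lamhat i - lams i‖ ^ 2 + ρ * N * ‖zhat - zs‖ ^ 2)
          + 4 / (1 + δ) * (6 * ρ * Mz * N * Δ) := by
        field_simp
end
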